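/- Let A be a real m×F matrix, B a real n×F matrix, Y_s a real m×C matrix, Y_t a real n×C matrix, and W a real F×C matrix. Then the gradient matching objective is bounded by twice the sum of the second-order and first-order distribution matching terms: ‖(1/m)·Aᵀ(AW − Y_s) − (1/n)·Bᵀ(BW − Y_t)‖_F² ≤ 2·‖(1/m)·AᵀA − (1/n)·BᵀB‖_F²·‖W‖_F² + 2·‖(1/m)·AᵀY_s − (1/n)·BᵀY_t‖_F². -/
import Mathlib


open Matrix

/-- Squared Frobenius norm of a real matrix: the sum of squares of the entries. -/
noncomputable def frobSq {m n : ℕ} (M : Matrix (Fin m) (Fin n) ℝ) : ℝ :=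
  ∑ i, ∑ j, (M i j) ^ 2

lemma frobSq_sub_le {m n : ℕ} (X Y : Matrix (Fin m) (Fin n) ℝ) :
    frobSq (X - Y) ≤ 2 * frobSq X + 2 * frobSq Y := by
  unfold frobSq
  rw [Finset.mul_sum, Finset.mul_sum, ← Finset.sum_add_distrib]
  apply Finset.sum_le_sum
  intro i _
  rw [Finset.mul_sum, Finset.mul_sum, ← Finset.sum_add_distrib]
  apply Finset.sum_le_sum
  intro j _
  simp only [Matrix.sub_apply]
  nlinarith [sq_nonneg (X i j + Y i j)]

lemma frobSq_mul_le {m n k : ℕ} (P : Matrix (Fin m) (Fin n) ℝ)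
    (W : Matrix (Fin n) (Fin k) ℝ) :
    frobSq (P * W) ≤ frobSq P * frobSq W := by
  unfold frobSq
  have h : ∀ i j, ((P * W) i j) ^ 2 ≤ (∑ l, (P i l) ^ 2) * (∑ l, (W l j) ^ 2) := by
    intro i j
    simpa [Matrix.mul_apply] using
      Finset.sum_mul_sq_le_sq_mul_sq Finset.univ (fun l => P i l) (fun l => W l j)
  calc ∑ i, ∑ j, ((P * W) i j) ^ 2
      ≤ ∑ i, ∑ j, (∑ l, (P i l) ^ 2) * (∑ l, (W l j) ^ 2) := by
        apply Finset.sum_le_sum; intro i _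
        apply Finset.sum_le_sum; intro j _
        exact h i j
    _ = (∑ i, ∑ j, (P i j) ^ 2) * (∑ i, ∑ j, (W i j) ^ 2) := by
        rw [Finset.sum_mul]
        apply Finset.sum_congr rfl
        intro i _
        rw [← Finset.mul_sum, Finset.sum_comm]

/-- Proposition 3 (squared form): the squared gradient matching loss is bounded
by twice the sum of the second-order and first-order distribution matching
terms. -/
theorem gradient_matching_sq_bound {m n F C : ℕ}
    (A : Matrix (Fin m) (Fin F) ℝ) (B : Matrix (Fin n) (Fin F) ℝ)
    (Ys : Matrix (Fin m) (Fin C) ℝ) (Yt : Matrix (Fin n) (Fin C) ℝ)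
    (W : Matrix (Fin F) (Fin C) ℝ) :
    frobSq ((1 / (m : ℝ)) • (Aᵀ * (A * W - Ys)) - (1 / (n : ℝ)) • (Bᵀ * (B * W - Yt)))
      ≤ 2 * (frobSq ((1 / (m : ℝ)) • (Aᵀ * A) - (1 / (n : ℝ)) • (Bᵀ * B)) * frobSq W)
        + 2 * frobSq ((1 / (m : ℝ)) • (Aᵀ * Ys) - (1 / (n : ℝ)) • (Bᵀ * Yt)) := by
  set P := (1 / (m : ℝ)) • (Aᵀ * A) - (1 / (n : ℝ)) • (Bᵀ * B) with hP
  set Q := (1 / (m : ℝ)) • (Aᵀ * Ys) - (1 / (n : ℝ)) • (Bᵀ * Yt) with hQ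
  have key : (1 / (m : ℝ)) • (Aᵀ * (A * W - Ys)) - (1 / (n : ℝ)) • (Bᵀ * (B * W - Yt))
      = P * W - Q := by
    rw [hP, hQ]
    simp only [Matrix.mul_sub, Matrix.sub_mul, Matrix.smul_mul, smul_sub, Matrix.mul_assoc]
    abel
  rw [key]
  calc frobSq (P * W - Q) ≤ 2 * frobSq (P * W) + 2 * frobSq Q := frobSq_sub_le _ _
    _ ≤ 2 * (frobSq P * frobSq W) + 2 * frobSq Q := by
        have := frobSq_mul_le P W; linarith
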